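/- arXiv:1102.3079 — 3 statements merged into one kernel-verified Lean document; each statement's English description precedes it below -/
import Mathlib

section
/- In the Ito-Sadahiro system (l = -β/(β+1)), the set {x ∈ [l, l+1) : T^n(x) = 0 for some n} contains a nonzero element if and only if β ≥ (1+√5)/2. -/
/-!
A point `y` with `T y = 0` satisfies `β y ∈ ℤ`. Following a nonzero orbit up to its last
nonzero point produces such a `y ≠ 0` in `[l, l + 1)`; since `l + 1 = 1/(β + 1) < 1/β`,
necessarily `β y ≤ -1`, and `l ≤ y ≤ -1/β` means `1/β ≤ β/(β + 1)`, i.e.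
`β + 1 ≤ β²`. Conversely, when `β + 1 ≤ β²` the point `-1/β` lies in `[l, l + 1)` and is
mapped to `0`.
-/

noncomputable def negBetaT (β l x : ℝ) : ℝ := -β * x - ⌊-β * x - l⌋

open Set Real goldenRatio

theorem Function.exists_mem_ne_apply_eq_of_iterate_eq {α : Type*} {f : α → α} {s : Set α}
    {a x : α} (hf : MapsTo f s s) (hx : x ∈ s) (hxa : x ≠ a) {n : ℕ} (hn : f^[n] x = a) :
    ∃ y ∈ s, y ≠ a ∧ f y = a := by
  induction n generalizing x with
  | zero => exact absurd hn hxa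
  | succ n ih =>
    rw [Function.iterate_succ_apply] at hn
    by_cases hfx : f x = a
    · exact ⟨x, hx, hxa, hfx⟩
    · exact ih (hf hx) hfx hn

theorem Real.goldenRatio_le_iff_add_one_le_sq {β : ℝ} (hβ : 0 ≤ β) :
    φ ≤ β ↔ β + 1 ≤ β ^ 2 := by
  have hfactor : β ^ 2 - (β + 1) = (β - φ) * (β - ψ) := by
    linear_combination β * goldenRatio_add_goldenConj - goldenRatio_mul_goldenConj
  have hψ : 0 < β - ψ := by linarith [goldenConj_neg]
  rw [← sub_nonneg, ← sub_nonneg (b := β + 1), hfactor, mul_nonneg_iff_of_pos_right hψ]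

theorem negBetaT_mem_Ico (β l x : ℝ) : negBetaT β l x ∈ Ico l (l + 1) := by
  unfold negBetaT
  constructor
  · linarith [Int.floor_le (-β * x - l)]
  · linarith [Int.lt_floor_add_one (-β * x - l)]

theorem exists_int_mul_eq_of_negBetaT_eq_zero {β l y : ℝ} (h : negBetaT β l y = 0) :
    ∃ k : ℤ, β * y = k :=
  ⟨-⌊-β * y - l⌋, by unfold negBetaT at h; push_cast; linarith⟩

theorem negBetaT_neg_inv {β l : ℝ} (hβ : β ≠ 0) (hl : l ∈ Ioc (-1) 0) :
    negBetaT β l (-β⁻¹) = 0 := by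
  have hfloor : ⌊(1 : ℝ) - l⌋ = 1 := by
    rw [Int.floor_eq_iff]
    constructor <;> push_cast <;> linarith [hl.1, hl.2]
  simp [negBetaT, hβ, hfloor]

theorem itoSadahiro_add_one_eq {β : ℝ} (hβ : 0 < β) : -β / (β + 1) + 1 = (β + 1)⁻¹ := by
  field_simp
  ring

theorem itoSadahiro_mem_Ioc {β : ℝ} (hβ : 0 < β) : -β / (β + 1) ∈ Ioc (-1) 0 := by
  refine ⟨?_, div_nonpos_of_nonpos_of_nonneg (by linarith) (by linarith)⟩
  rw [lt_div_iff₀ (by linarith)]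
  linarith

theorem add_one_le_sq_of_int_mul_mem_Ico {β y : ℝ} (hβ : 0 < β)
    (hy : y ∈ Ico (-β / (β + 1)) (-β / (β + 1) + 1)) (hy0 : y ≠ 0) {k : ℤ}
    (hk : β * y = k) : β + 1 ≤ β ^ 2 := by
  obtain ⟨hl, hu⟩ := hy
  rw [itoSadahiro_add_one_eq hβ] at hu
  have hk0 : k ≠ 0 := by
    rintro rfl
    exact hy0 ((mul_eq_zero.mp (hk.trans Int.cast_zero)).resolve_left hβ.ne')
  have hk_lt : (k : ℝ) < 1 := by
    rw [← hk, ← lt_inv_mul_iff₀ hβ, mul_one]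
    exact hu.trans_le (inv_anti₀ hβ (by linarith))
  have hk_le : (k : ℝ) ≤ -1 := by
    have : k < 1 := by exact_mod_cast hk_lt
    exact_mod_cast (by omega : k ≤ -1)
  have hprod : β * (-β / (β + 1)) ≤ -1 :=
    (mul_le_mul_of_nonneg_left hl hβ.le).trans (hk ▸ hk_le)
  rw [mul_div_assoc', div_le_iff₀ (by linarith)] at hprod
  linarith

theorem stmt_9 (β : ℝ) (hβ : 1 < β) (l : ℝ) (hl : l = -β / (β + 1)) :
    (∃ x ∈ Set.Ico l (l + 1), x ≠ 0 ∧ ∃ n : ℕ, (negBetaT β l)^[n] x = 0) ↔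
      (1 + Real.sqrt 5) / 2 ≤ β := by
  have hβ0 : 0 < β := by linarith
  subst hl
  rw [goldenRatio_le_iff_add_one_le_sq hβ0.le]
  constructor
  · rintro ⟨x, hx, hx0, n, hn⟩
    obtain ⟨y, hy, hy0, hTy⟩ := Function.exists_mem_ne_apply_eq_of_iterate_eq
      (fun x _ ↦ negBetaT_mem_Ico β _ x) hx hx0 hn
    obtain ⟨k, hk⟩ := exists_int_mul_eq_of_negBetaT_eq_zero hTy
    exact add_one_le_sq_of_int_mul_mem_Ico hβ0 hy hy0 hk
  · intro hsq
    refine ⟨-β⁻¹, ⟨?_, ?_⟩, by simp [hβ0.ne'], 1,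
      negBetaT_neg_inv hβ0.ne' (itoSadahiro_mem_Ioc hβ0)⟩
    · rw [neg_div, neg_le_neg_iff, le_div_iff₀ (by linarith), inv_mul_eq_div,
        div_le_iff₀ hβ0]
      linarith
    · rw [itoSadahiro_add_one_eq hβ0]
      exact (neg_neg_of_pos (inv_pos.mpr hβ0)).trans (inv_pos.mpr (by linarith))
end

section
/- Every suffix of d*(r) = (r_i)_{i≥1} satisfies d(l) ⪯_alt (r_i, r_{i+1}, ...) ⪯_alt d*(r) for all i ≥ 1. -/
noncomputable def negBetaDigit (β l x : ℝ) (i : ℕ) : ℤ :=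
  ⌊-β * ((negBetaT β l)^[i] x) - l⌋

def AltLt (u v : ℕ → ℤ) : Prop :=
  ∃ m : ℕ, (∀ k < m, u k = v k) ∧ (-1 : ℤ) ^ (m + 1) * (v m - u m) > 0

def AltLe (u v : ℕ → ℤ) : Prop := AltLt u v ∨ u = v

/-! Digits of the $(-β,l)$-expansion are monotone for the alternate order: if `x ≤ y`, then as
long as the digits agree, `(-1)^k (T^k y - T^k x) ≥ 0`, so at the first differing digit the order
of the digits is reversed exactly when `k` is even. Since `T` maps `[l, l+1)` into itself, for
small `ε` the suffix of `d(l+1-ε)` starting at `i` is the expansion of a point of `[l, l+1)`,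
hence lies between `d(l)` and `d(l+1-ε')` for all small `ε'`. The order `⪯_alt` is closed in
the product topology, so these inequalities pass to the limit `d*(r)`. -/

open Filter Topology

lemma altLe_of_first_diff {u v : ℕ → ℤ}
    (h : ∀ m, (∀ k < m, u k = v k) → u m ≠ v m → 0 < (-1 : ℤ) ^ (m + 1) * (v m - u m)) :
    AltLe u v := by
  by_cases huv : u = v
  · exact Or.inr huv
  have hex : ∃ k, u k ≠ v k := Function.ne_iff.mp huv
  have hmin : ∀ k < Nat.find hex, u k = v k := fun k hk => not_not.mp (Nat.find_min hex hk)
  exact Or.inl ⟨_, hmin, h _ hmin (Nat.find_spec hex)⟩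

lemma altLe_of_forall_prefix {u v : ℕ → ℤ}
    (h : ∀ N, ∃ u' v' : ℕ → ℤ, (∀ k ≤ N, u' k = u k ∧ v' k = v k) ∧ AltLe u' v') :
    AltLe u v := by
  refine altLe_of_first_diff fun m hagree hne => ?_
  obtain ⟨u', v', hpre, hlt | heq⟩ := h m
  · obtain ⟨m', hagree', hpos⟩ := hlt
    rcases lt_trichotomy m' m with hm | rfl | hm
    · rw [(hpre m' hm.le).1, (hpre m' hm.le).2, hagree m' hm, sub_self, mul_zero] at hpos
      exact absurd hpos (lt_irrefl 0)
    · rwa [(hpre m' le_rfl).1, (hpre m' le_rfl).2] at hpos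
    · exact absurd (by rw [← (hpre m le_rfl).1, ← (hpre m le_rfl).2]; exact hagree' m hm) hne
  · exact absurd (by rw [← (hpre m le_rfl).1, ← (hpre m le_rfl).2, heq]) hne

section NegBeta

variable {β l : ℝ}

lemma negBetaT_mapsTo : Set.MapsTo (negBetaT β l) (Set.Ico l (l + 1)) (Set.Ico l (l + 1)) :=
  fun x _ => by
    have h₁ := Int.floor_le (-β * x - l)
    have h₂ := Int.lt_floor_add_one (-β * x - l)
    constructor <;> (unfold negBetaT; linarith)

lemma negBetaT_iterate_succ (x : ℝ) (k : ℕ) :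
    (negBetaT β l)^[k + 1] x = -β * (negBetaT β l)^[k] x - negBetaDigit β l x k := by
  rw [Function.iterate_succ_apply']
  rfl

lemma negBetaDigit_add (x : ℝ) (i k : ℕ) :
    negBetaDigit β l x (i + k) = negBetaDigit β l ((negBetaT β l)^[i] x) k := by
  rw [negBetaDigit, negBetaDigit, Nat.add_comm, Function.iterate_add_apply]

lemma neg_one_pow_mul_negBetaT_iterate_sub_nonneg (hβ : 0 ≤ β) {x y : ℝ} (hxy : x ≤ y)
    {m : ℕ} (h : ∀ k < m, negBetaDigit β l x k = negBetaDigit β l y k) :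
    0 ≤ (-1 : ℝ) ^ m * ((negBetaT β l)^[m] y - (negBetaT β l)^[m] x) := by
  induction m with
  | zero => simpa using hxy
  | succ m ih =>
    have ih := ih fun k hk => h k (hk.trans m.lt_succ_self)
    rw [negBetaT_iterate_succ, negBetaT_iterate_succ, h m m.lt_succ_self]
    have hrw : (-1 : ℝ) ^ (m + 1) * (-β * (negBetaT β l)^[m] y - negBetaDigit β l y m -
        (-β * (negBetaT β l)^[m] x - negBetaDigit β l y m)) =
        β * ((-1 : ℝ) ^ m * ((negBetaT β l)^[m] y - (negBetaT β l)^[m] x)) := by ring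
    rw [hrw]
    exact mul_nonneg hβ ih

lemma negBetaDigit_altLe_of_le (hβ : 0 ≤ β) {x y : ℝ} (hxy : x ≤ y) :
    AltLe (negBetaDigit β l x) (negBetaDigit β l y) := by
  refine altLe_of_first_diff fun m hagree hne => ?_
  have hsign := neg_one_pow_mul_negBetaT_iterate_sub_nonneg hβ hxy hagree
  have hfloor : ∀ a b : ℝ, a ≤ b → ⌊-β * b - l⌋ ≤ ⌊-β * a - l⌋ := fun a b hab =>
    Int.floor_mono (by nlinarith)
  rcases Nat.even_or_odd m with hm | hm
  · rw [hm.neg_one_pow, one_mul, sub_nonneg] at hsign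
    have hlt : negBetaDigit β l y m < negBetaDigit β l x m :=
      (hfloor _ _ hsign).lt_of_ne (Ne.symm hne)
    rw [pow_succ, hm.neg_one_pow]
    linarith
  · rw [hm.neg_one_pow, neg_one_mul, neg_nonneg, sub_nonpos] at hsign
    have hlt : negBetaDigit β l x m < negBetaDigit β l y m := (hfloor _ _ hsign).lt_of_ne hne
    rw [hm.add_one.neg_one_pow]
    linarith

end NegBeta

theorem stmt_13_general (β l : ℝ) (hβ : 1 < β)
    (rstr : ℕ → ℤ)
    (hrstr : ∀ i : ℕ, ∃ ε₀ > 0, ∀ ε : ℝ, 0 < ε → ε < ε₀ →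
      negBetaDigit β l (l + 1 - ε) i = rstr i)
    (i : ℕ) :
    AltLe (negBetaDigit β l l) (fun k => rstr (i + k)) ∧
      AltLe (fun k => rstr (i + k)) rstr := by
  have hagree (N : ℕ) : ∀ᶠ ε in 𝓝[>] (0 : ℝ), ∀ k ≤ N, negBetaDigit β l (l + 1 - ε) k = rstr k :=
    (eventually_all_finite (Set.finite_Iic N)).2 fun k _ => by
      obtain ⟨ε₀, hε₀, h⟩ := hrstr k
      exact Filter.mem_of_superset (Ioo_mem_nhdsGT hε₀) fun ε hε => h ε hε.1 hε.2
  have hsuffix (N : ℕ) : ∃ y ∈ Set.Ico l (l + 1), ∀ k ≤ N, negBetaDigit β l y k = rstr (i + k) := by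
    obtain ⟨ε, hε, hε₁⟩ := ((hagree (i + N)).and (Ioo_mem_nhdsGT one_pos)).exists
    refine ⟨(negBetaT β l)^[i] (l + 1 - ε), negBetaT_mapsTo.iterate i ⟨?_, ?_⟩, fun k hk => ?_⟩
    · linarith [hε₁.2]
    · linarith [hε₁.1]
    · rw [← negBetaDigit_add]
      exact hε (i + k) (by omega)
  constructor <;> refine altLe_of_forall_prefix fun N => ?_ <;> obtain ⟨y, hy, hyN⟩ := hsuffix N
  · exact ⟨_, _, fun k hk => ⟨rfl, hyN k hk⟩, negBetaDigit_altLe_of_le (by linarith) hy.1⟩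
  · obtain ⟨ε, hε, hεy⟩ := ((hagree N).and (Ioo_mem_nhdsGT (sub_pos.2 hy.2))).exists
    exact ⟨_, _, fun k hk => ⟨hyN k hk, hε k hk⟩,
      negBetaDigit_altLe_of_le (by linarith) (by linarith [hεy.2])⟩

theorem stmt_13 (β l : ℝ) (hβ : 1 < β) (hl₁ : -1 < l) (hl₂ : l ≤ 0)
    (rstr : ℕ → ℤ)
    (hrstr : ∀ i : ℕ, ∃ ε₀ > 0, ∀ ε : ℝ, 0 < ε → ε < ε₀ →
      negBetaDigit β l (l + 1 - ε) i = rstr i)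
    (i : ℕ) :
    AltLe (negBetaDigit β l l) (fun k => rstr (i + k)) ∧
      AltLe (fun k => rstr (i + k)) rstr :=
  stmt_13_general β l hβ rstr hrstr i
end

section
/- If d(l) begins with two equal digits aa, then d(l) = a^ω and consequently l = -a/(β+1). -/
/-!
Every value of `T` is at least `l`, so `l ≤ T l` and `l ≤ T² l`. If the first two digits both equal `a`,
then `T l = -β l - a` and `T² l = -β T l - a`; eliminating `a` gives `T² l = T l - β (T l - l)`, so
`l ≤ T² l` reads `(β - 1)(T l - l) ≤ 0`. As `β > 1` this forces `T l = l`: `l` is a fixed point of `T`,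
all its digits are `a`, and `l = -β l - a` solves to `l = -a / (β + 1)`.
-/

open Function

section NegBeta

variable {β l : ℝ}

theorem negBetaT_eq_sub_digit (x : ℝ) : negBetaT β l x = -β * x - negBetaDigit β l x 0 := rfl

theorem le_negBetaT (x : ℝ) : l ≤ negBetaT β l x := by
  have := Int.floor_le (-β * x - l)
  rw [negBetaT]
  linarith

theorem negBetaDigit_succ (x : ℝ) (i : ℕ) :
    negBetaDigit β l x (i + 1) = negBetaDigit β l (negBetaT β l x) i := by
  rw [negBetaDigit, negBetaDigit, iterate_succ_apply]

theorem isFixedPt_negBetaT_of_digit_zero_eq_digit_one (hβ : 1 < β)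
    (h : negBetaDigit β l l 0 = negBetaDigit β l l 1) : IsFixedPt (negBetaT β l) l := by
  set y := negBetaT β l l
  have hly : l ≤ y := le_negBetaT l
  have hlTy : l ≤ negBetaT β l y := le_negBetaT y
  have hTy : negBetaT β l y = y - β * (y - l) := by
    have hy : y = -β * l - negBetaDigit β l l 0 := negBetaT_eq_sub_digit l
    rw [negBetaT_eq_sub_digit y, ← negBetaDigit_succ, ← h]
    linear_combination -hy
  have hβy : (β - 1) * (y - l) ≤ 0 := by linarith
  exact le_antisymm (sub_nonpos.1 (nonpos_of_mul_nonpos_right hβy (sub_pos.2 hβ))) hly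

theorem negBetaDigit_of_isFixedPt {x : ℝ} (hx : IsFixedPt (negBetaT β l) x) (k : ℕ) :
    negBetaDigit β l x k = negBetaDigit β l x 0 := by
  rw [negBetaDigit, (hx.iterate k).eq]
  rfl

theorem eq_neg_digit_div_of_isFixedPt (hβ : β + 1 ≠ 0) {x : ℝ} (hx : IsFixedPt (negBetaT β l) x) :
    x = -(negBetaDigit β l x 0 : ℝ) / (β + 1) := by
  have hfix : x = -β * x - negBetaDigit β l x 0 := by
    conv_lhs => rw [← hx.eq, negBetaT_eq_sub_digit]
  rw [eq_div_iff hβ]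
  linarith

end NegBeta

theorem stmt_15_general (β l : ℝ) (hβ : 1 < β)
    (a : ℤ) (h0 : negBetaDigit β l l 0 = a) (h1 : negBetaDigit β l l 1 = a) :
    (∀ k : ℕ, negBetaDigit β l l k = a) ∧ l = -(a : ℝ) / (β + 1) := by
  have hfix : IsFixedPt (negBetaT β l) l :=
    isFixedPt_negBetaT_of_digit_zero_eq_digit_one hβ (h0.trans h1.symm)
  refine ⟨fun k => (negBetaDigit_of_isFixedPt hfix k).trans h0, ?_⟩
  rw [← h0]
  exact eq_neg_digit_div_of_isFixedPt (by linarith) hfix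

theorem stmt_15 (β l : ℝ) (hβ : 1 < β) (hl₁ : -1 < l) (hl₂ : l ≤ 0)
    (a : ℤ) (h0 : negBetaDigit β l l 0 = a) (h1 : negBetaDigit β l l 1 = a) :
    (∀ k : ℕ, negBetaDigit β l l k = a) ∧ l = -(a : ℝ) / (β + 1) :=
  stmt_15_general β l hβ a h0 h1
end
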